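/- arXiv:2511.12636 — 2 statements merged into one kernel-verified Lean document; each statement's English description precedes it below -/
import Mathlib

section
/- Let ν be a locally finite Borel measure on X \ {x}, where X is a metric space and x ∈ X, and suppose that for some constant C and all ρ > 0 one has ρ^m · ν ≤ C·η as measures on X \ closure(B_ρ(x)), where η is a finite Borel measure on X. Then ∫ φ(x') d(x,x')^m dν(x') ≤ C·b^m ∫ φ dη for every b > 1 and every continuous nonnegative φ compactly supported in X \ {x}; consequently ∫ φ(x') d(x,x')^m dν(x') ≤ C ∫ φ dη. -/
open MeasureTheory Metric Filter Set
open scoped ENNReal Topology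

/-!
Cut `X \ {x}` into the annuli `b ^ n < d(x, x') ≤ b ^ (n + 1)`, `n : ℤ`. On the `n`-th annulus
`d(x, x') ^ m ≤ b ^ m (b ^ n) ^ m`, and the hypothesis with `ρ = b ^ n` applies there, so the
`ν`-integral over each annulus is at most `C b ^ m` times the `η`-integral of `φ`; summing over the
disjoint annuli gives the bound with the factor `b ^ m`, which tends to `1` as `b → 1⁺`.
-/

open Function in
theorem pairwise_disjoint_Ioc_zpow₀ {K : Type*} [Field K] [LinearOrder K] [IsStrictOrderedRing K]
    {b : K} (hb : 1 < b) :
    Pairwise (Disjoint on fun n : ℤ => Ioc (b ^ n) (b ^ (n + 1))) := by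
  simpa [Order.succ_eq_add_one] using
    (zpow_right_strictMono₀ hb).monotone.pairwise_disjoint_on_Ioc_succ

theorem iUnion_preimage_dist_Ioc_zpow {X : Type*} [MetricSpace X] (x : X) {b : ℝ} (hb : 1 < b) :
    ⋃ n : ℤ, dist x ⁻¹' Ioc (b ^ n) (b ^ (n + 1)) = {x}ᶜ := by
  ext y
  simp only [mem_iUnion, mem_preimage, mem_compl_singleton_iff]
  refine ⟨fun ⟨n, hn⟩ hyx => ?_, fun hyx => exists_mem_Ioc_zpow (dist_pos.2 hyx.symm) hb⟩
  rw [hyx, dist_self] at hn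
  exact (zpow_pos (zero_lt_one.trans hb) n).not_ge hn.1.le

theorem le_of_forall_one_lt_le_ofReal_pow_mul {a c : ℝ≥0∞} (m : ℕ)
    (h : ∀ b : ℝ, 1 < b → a ≤ ENNReal.ofReal (b ^ m) * c) : a ≤ c := by
  have hpow : Tendsto (fun b : ℝ => ENNReal.ofReal (b ^ m)) (𝓝[>] 1) (𝓝 1) := by
    have hcont : Continuous fun b : ℝ => ENNReal.ofReal (b ^ m) :=
      ENNReal.continuous_ofReal.comp (continuous_pow m)
    simpa using (hcont.tendsto 1).mono_left nhdsWithin_le_nhds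
  simpa using ge_of_tendsto (ENNReal.Tendsto.mul_const hpow (.inl one_ne_zero))
    (eventually_nhdsWithin_of_forall h)

theorem mul_setLIntegral_le_of_forall_subset {X : Type*} [MeasurableSpace X] {ν η : Measure X}
    {A : Set X} (hA : MeasurableSet A) {c C : ℝ≥0∞}
    (h : ∀ B, MeasurableSet B → B ⊆ A → c * ν B ≤ C * η B) (g : X → ℝ≥0∞) :
    c * ∫⁻ y in A, g y ∂ν ≤ C * ∫⁻ y in A, g y ∂η := by
  have hle : (c • ν).restrict A ≤ (C • η).restrict A := by
    refine Measure.le_iff.2 fun s hs => ?_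
    simpa only [Measure.restrict_apply hs, Measure.smul_apply, smul_eq_mul] using
      h _ (hs.inter hA) inter_subset_right
  simpa only [Measure.restrict_smul, lintegral_smul_measure, smul_eq_mul] using
    lintegral_mono' hle le_rfl

theorem setLIntegral_mul_dist_pow_le {X : Type*} [PseudoMetricSpace X] [MeasurableSpace X]
    {ν η : Measure X} {x : X} {m : ℕ} {A : Set X} (hA : MeasurableSet A) {ρ b : ℝ} (hb : 0 ≤ b)
    (hAρ : ∀ y ∈ A, dist x y ≤ b * ρ) {C : ℝ≥0∞}
    (h : ∀ B, MeasurableSet B → B ⊆ A → ENNReal.ofReal (ρ ^ m) * ν B ≤ C * η B)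
    (g : X → ℝ≥0∞) :
    ∫⁻ y in A, g y * ENNReal.ofReal (dist x y ^ m) ∂ν ≤
      C * ENNReal.ofReal (b ^ m) * ∫⁻ y in A, g y ∂η := by
  calc ∫⁻ y in A, g y * ENNReal.ofReal (dist x y ^ m) ∂ν
      ≤ ∫⁻ y in A, ENNReal.ofReal (b ^ m) * ENNReal.ofReal (ρ ^ m) * g y ∂ν := by
        refine setLIntegral_mono' hA fun y hy => ?_
        rw [← ENNReal.ofReal_mul (by positivity), ← mul_pow, mul_comm]
        gcongr
        exact hAρ y hy
    _ = ENNReal.ofReal (b ^ m) * (ENNReal.ofReal (ρ ^ m) * ∫⁻ y in A, g y ∂ν) := by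
        rw [lintegral_const_mul' _ _ (by finiteness), mul_assoc]
    _ ≤ ENNReal.ofReal (b ^ m) * (C * ∫⁻ y in A, g y ∂η) :=
        mul_le_mul_right (mul_setLIntegral_le_of_forall_subset hA h g) _
    _ = C * ENNReal.ofReal (b ^ m) * ∫⁻ y in A, g y ∂η := by ring

theorem lintegral_mul_dist_pow_le {X : Type*} [MetricSpace X] [MeasurableSpace X]
    [OpensMeasurableSpace X] {ν η : Measure X} {x : X} {m : ℕ} {C : ℝ≥0∞}
    (hdom : ∀ ρ > (0:ℝ), ∀ B : Set X, MeasurableSet B → B ⊆ (closedBall x ρ)ᶜ →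
      ENNReal.ofReal (ρ ^ m) * ν B ≤ C * η B)
    {g : X → ℝ≥0∞} (hgx : g x = 0) {b : ℝ} (hb : 1 < b) :
    ∫⁻ y, g y * ENNReal.ofReal (dist x y ^ m) ∂ν ≤ C * ENNReal.ofReal (b ^ m) * ∫⁻ y, g y ∂η := by
  set A : ℤ → Set X := fun n => dist x ⁻¹' Ioc (b ^ n) (b ^ (n + 1))
  have hAm (n : ℤ) : MeasurableSet (A n) :=
    (continuous_const.dist continuous_id).measurable measurableSet_Ioc
  have hAd : Pairwise (Function.onFun Disjoint A) := fun i j hij =>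
    (pairwise_disjoint_Ioc_zpow₀ hb hij).preimage _
  have hsupp : (fun y => g y * ENNReal.ofReal (dist x y ^ m)).support ⊆ ⋃ n, A n := by
    rw [iUnion_preimage_dist_Ioc_zpow x hb]
    rintro y hy rfl
    simp [hgx] at hy
  have hannulus (n : ℤ) : ∫⁻ y in A n, g y * ENNReal.ofReal (dist x y ^ m) ∂ν ≤
      C * ENNReal.ofReal (b ^ m) * ∫⁻ y in A n, g y ∂η := by
    refine setLIntegral_mul_dist_pow_le (hAm n) (by positivity) (ρ := b ^ n) ?_ ?_ g
    · intro y hy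
      rw [← zpow_one_add₀ (by positivity), add_comm]
      exact hy.2
    · intro B hB hBA
      refine hdom _ (by positivity) B hB fun y hy => ?_
      simpa [dist_comm] using (hBA hy).1
  calc ∫⁻ y, g y * ENNReal.ofReal (dist x y ^ m) ∂ν
      = ∑' n, ∫⁻ y in A n, g y * ENNReal.ofReal (dist x y ^ m) ∂ν := by
        rw [← lintegral_iUnion hAm hAd, setLIntegral_eq_of_support_subset hsupp]
    _ ≤ ∑' n, C * ENNReal.ofReal (b ^ m) * ∫⁻ y in A n, g y ∂η := ENNReal.tsum_le_tsum hannulus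
    _ = C * ENNReal.ofReal (b ^ m) * ∫⁻ y in ⋃ n, A n, g y ∂η := by
        rw [lintegral_iUnion hAm hAd, ENNReal.tsum_mul_left]
    _ ≤ C * ENNReal.ofReal (b ^ m) * ∫⁻ y, g y ∂η :=
        mul_le_mul_right (setLIntegral_le_lintegral _ _) _

theorem stmt8_general {X : Type*} [MetricSpace X] [MeasurableSpace X] [BorelSpace X]
    {m : ℕ} (x : X) (ν η : Measure X)
    (C : ℝ≥0∞)
    (hdom : ∀ ρ > (0:ℝ), ∀ B : Set X, MeasurableSet B → B ⊆ (closedBall x ρ)ᶜ →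
      ENNReal.ofReal (ρ ^ m) * ν B ≤ C * η B)
    (φ : X → ℝ) (hφx : tsupport φ ⊆ {x}ᶜ) :
    (∀ b : ℝ, 1 < b →
      ∫⁻ x', ENNReal.ofReal (φ x') * ENNReal.ofReal (dist x x' ^ m) ∂ν ≤
        C * ENNReal.ofReal (b ^ m) * ∫⁻ x', ENNReal.ofReal (φ x') ∂η) ∧
    ∫⁻ x', ENNReal.ofReal (φ x') * ENNReal.ofReal (dist x x' ^ m) ∂ν ≤
      C * ∫⁻ x', ENNReal.ofReal (φ x') ∂η := by
  have hφx0 : ENNReal.ofReal (φ x) = 0 := by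
    rw [image_eq_zero_of_notMem_tsupport fun h => hφx h rfl, ENNReal.ofReal_zero]
  have hannular (b : ℝ) (hb : 1 < b) :=
    lintegral_mul_dist_pow_le hdom (g := fun y => ENNReal.ofReal (φ y)) hφx0 hb
  refine ⟨hannular, le_of_forall_one_lt_le_ofReal_pow_mul m fun b hb => ?_⟩
  rw [mul_left_comm, ← mul_assoc]
  exact hannular b hb

/-- Annular decomposition estimate: if `ρ^m · ν ≤ C·η` outside every closed ball about `x`,
then `∫ φ(x') d(x,x')^m dν ≤ C·b^m ∫ φ dη` for every `b > 1`, and hence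
`∫ φ(x') d(x,x')^m dν ≤ C ∫ φ dη`, for every continuous nonnegative `φ` compactly
supported in `X \ {x}`. -/
theorem stmt8 {X : Type*} [MetricSpace X] [MeasurableSpace X] [BorelSpace X]
    {m : ℕ} (x : X) (ν η : Measure X) [IsFiniteMeasure η]
    (hloc : ∀ K : Set X, IsCompact K → K ⊆ {x}ᶜ → ν K ≠ ∞)
    (C : ℝ≥0∞)
    (hdom : ∀ ρ > (0:ℝ), ∀ B : Set X, MeasurableSet B → B ⊆ (closedBall x ρ)ᶜ →
      ENNReal.ofReal (ρ ^ m) * ν B ≤ C * η B)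
    (φ : X → ℝ) (hφc : Continuous φ) (hφs : HasCompactSupport φ)
    (hφ0 : 0 ≤ φ) (hφx : tsupport φ ⊆ {x}ᶜ) :
    (∀ b : ℝ, 1 < b →
      ∫⁻ x', ENNReal.ofReal (φ x') * ENNReal.ofReal (dist x x' ^ m) ∂ν ≤
        C * ENNReal.ofReal (b ^ m) * ∫⁻ x', ENNReal.ofReal (φ x') ∂η) ∧
    ∫⁻ x', ENNReal.ofReal (φ x') * ENNReal.ofReal (dist x x' ^ m) ∂ν ≤
      C * ∫⁻ x', ENNReal.ofReal (φ x') ∂η :=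
  stmt8_general x ν η C hdom φ hφx
end

section
/- Let Π : X → ℝ^m be an α-Hölder continuous map on a metric space X with Hölder seminorm ‖Π‖_{C^{0,α}}, and let B ⊂ X be a Borel set. Then ∫_{ℝ^m} ℋ⁰(B ∩ Π⁻¹(y)) dℋ^m(y) ≤ ‖Π‖_{C^{0,α}}^m · ℋ^{αm}(B). -/
open MeasureTheory Metric Filter Set
open scoped ENNReal Topology

open Function

/-!
Cut `B` into countably many disjoint Borel pieces `D i` of diameter at most `δ` (possible as soon
as `ℋ^{αm}(B) < ∞`). Counting, for each `y`, the pieces whose image contains `y` gives a function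
with integral `∑ ℋ^m(Π(D i)) ≤ ‖Π‖^m ∑ ℋ^{αm}(D i) = ‖Π‖^m ℋ^{αm}(B)`. Once `δ` is smaller than
the minimal distance between the points of a finite subset of the fibre over `y`, these points lie
in distinct pieces, so the count at `y` dominates their number; letting `δ → 0`, Fatou's lemma
concludes.
-/

theorem HolderWith.of_dist_le {X Y : Type*} [PseudoMetricSpace X] [PseudoMetricSpace Y]
    {C r : NNReal} {f : X → Y} (h : ∀ x y, dist (f x) (f y) ≤ C * dist x y ^ (r : ℝ)) :
    HolderWith C r f := fun x y => by
  rw [edist_dist, edist_dist, ← ENNReal.ofReal_coe_nnreal,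
    ENNReal.ofReal_rpow_of_nonneg dist_nonneg r.coe_nonneg, ← ENNReal.ofReal_mul C.coe_nonneg]
  exact ENNReal.ofReal_le_ofReal (h x y)

namespace MeasureTheory

section EMetricSpace

variable {X : Type*} [EMetricSpace X]

theorem eventually_subsingleton_inter_of_ediam_le {ι : Type*} (F : Finset X) {D : ℕ → ι → Set X}
    {r : ℕ → ℝ≥0∞} (hr : Tendsto r atTop (𝓝 0)) (hD : ∀ n i, ediam (D n i) ≤ r n) :
    ∀ᶠ n in atTop, ∀ i, (↑F ∩ D n i).Subsingleton := by
  have hsep : ∀ᶠ n in atTop, ∀ p ∈ F ×ˢ F, p.1 ≠ p.2 → r n < edist p.1 p.2 :=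
    (Finset.eventually_all _).2 fun p _ => eventually_imp_distrib_left.2 fun hne =>
      hr.eventually (gt_mem_nhds (edist_pos.2 hne))
  filter_upwards [hsep] with n hn i x hx x' hx'
  by_contra hne
  exact (hn (x, x') (Finset.mk_mem_product hx.1 hx'.1) hne).not_ge
    ((edist_le_ediam_of_mem hx.2 hx'.2).trans (hD n i))

variable [MeasurableSpace X] [BorelSpace X]

theorem exists_cover_ediam_le_of_hausdorffMeasure_ne_top {d : ℝ} {s : Set X} (h : μH[d] s ≠ ∞)
    {r : ℝ≥0∞} (hr : 0 < r) : ∃ t : ℕ → Set X, s ⊆ ⋃ n, t n ∧ ∀ n, ediam (t n) ≤ r := by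
  by_contra! hcover
  refine h (eq_top_iff.2 ?_)
  rw [Measure.hausdorffMeasure_apply]
  refine le_iSup₂_of_le r hr (le_iInf₂ fun t hst => le_iInf fun hdiam => ?_)
  obtain ⟨n, hn⟩ := hcover t hst
  exact absurd (hdiam n) hn.not_ge

theorem exists_measurable_partition_ediam_le {d : ℝ} {s : Set X} (hs : MeasurableSet s)
    (h : μH[d] s ≠ ∞) {r : ℝ≥0∞} (hr : 0 < r) :
    ∃ D : ℕ → Set X, (∀ i, MeasurableSet (D i)) ∧ Pairwise (Disjoint on D) ∧ ⋃ i, D i = s ∧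
      ∀ i, ediam (D i) ≤ r := by
  obtain ⟨t, hst, ht⟩ := exists_cover_ediam_le_of_hausdorffMeasure_ne_top h hr
  -- passing to closures makes the pieces measurable without changing their diameters
  refine ⟨fun i => s ∩ disjointed (fun j => closure (t j)) i,
    fun i => hs.inter (.disjointed (fun _ => isClosed_closure.measurableSet) i),
    fun i j hij => (disjoint_disjointed _ hij).mono inter_subset_right inter_subset_right, ?_,
    fun i => ?_⟩
  · rw [← inter_iUnion, iUnion_disjointed]
    exact inter_eq_left.2 (hst.trans (iUnion_mono fun _ => subset_closure))
  · calc ediam (s ∩ disjointed (fun j => closure (t j)) i)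
        ≤ ediam (closure (t i)) := ediam_mono (inter_subset_right.trans (disjointed_subset _ i))
      _ = ediam (t i) := ediam_closure _
      _ ≤ r := ht i

theorem hausdorffMeasure_zero_le_of_forall_finset {A : Set X} {c : ℝ≥0∞}
    (h : ∀ F : Finset X, ↑F ⊆ A → (F.card : ℝ≥0∞) ≤ c) : μH[0] A ≤ c := by
  rcases A.finite_or_infinite with hA | hA
  · calc μH[0] A = μH[0] (⋃ x ∈ hA.toFinset, {x}) := by simp
      _ ≤ ∑ x ∈ hA.toFinset, μH[0] {x} := measure_biUnion_finset_le _ _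
      _ = hA.toFinset.card := by simp
      _ ≤ c := h _ (by simp)
  · suffices c = ∞ by simp [this]
    refine ENNReal.eq_top_of_forall_nnreal_le fun a => ?_
    obtain ⟨F, hFA, hF⟩ := hA.exists_subset_card_eq ⌈a⌉₊
    calc (a : ℝ≥0∞) ≤ ⌈a⌉₊ := by exact_mod_cast Nat.le_ceil a
      _ ≤ c := hF ▸ h F hFA

end EMetricSpace

section Multiplicity

variable {X Y : Type*} [MeasurableSpace Y] (μ : Measure Y) (P : X → Y) (D : ℕ → Set X)

/-- Images are replaced by their measurable hulls so that the count is measurable in `y`. -/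
noncomputable def imageMultiplicity (y : Y) : ℝ≥0∞ :=
  ∑' i, (toMeasurable μ (P '' D i)).indicator 1 y

theorem measurable_imageMultiplicity : Measurable (imageMultiplicity μ P D) :=
  .tsum fun _ => measurable_one.indicator (measurableSet_toMeasurable _ _)

theorem lintegral_imageMultiplicity :
    ∫⁻ y, imageMultiplicity μ P D y ∂μ = ∑' i, μ (P '' D i) := by
  unfold imageMultiplicity
  rw [lintegral_tsum fun i =>
    (measurable_one.indicator (measurableSet_toMeasurable _ _)).aemeasurable]
  simp only [lintegral_indicator_one (measurableSet_toMeasurable _ _), measure_toMeasurable]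

theorem lintegral_imageMultiplicity_le [MeasurableSpace X] {ν : Measure X} {c : ℝ≥0∞}
    (hP : ∀ s, μ (P '' s) ≤ c * ν s) {D : ℕ → Set X} (hDm : ∀ i, MeasurableSet (D i))
    (hDd : Pairwise (Disjoint on D)) :
    ∫⁻ y, imageMultiplicity μ P D y ∂μ ≤ c * ν (⋃ i, D i) := by
  rw [lintegral_imageMultiplicity, measure_iUnion hDd hDm, ← ENNReal.tsum_mul_left]
  exact ENNReal.tsum_le_tsum fun i => hP (D i)

variable {μ P D}

theorem card_le_imageMultiplicity {F : Finset X} {y : Y} (hF : ∀ x ∈ F, P x = y ∧ ∃ i, x ∈ D i)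
    (hsep : ∀ i, (↑F ∩ D i).Subsingleton) : (F.card : ℝ≥0∞) ≤ imageMultiplicity μ P D y := by
  choose! g hg using fun x hx => (hF x hx).2
  have hinj : InjOn g F := fun x hx x' hx' hxx' =>
    hsep (g x) ⟨hx, hg x hx⟩ ⟨hx', hxx' ▸ hg x' hx'⟩
  calc (F.card : ℝ≥0∞) = ∑ _i ∈ F.image g, 1 := by simp [Finset.card_image_of_injOn hinj]
    _ = ∑ i ∈ F.image g, (toMeasurable μ (P '' D i)).indicator 1 y := by
      refine Finset.sum_congr rfl (Finset.forall_mem_image.2 fun x hx => ?_)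
      have hy : y ∈ P '' D (g x) := ⟨x, hg x hx, (hF x hx).1⟩
      rw [indicator_of_mem (subset_toMeasurable _ _ hy), Pi.one_apply]
    _ ≤ imageMultiplicity μ P D y := ENNReal.sum_le_tsum _

end Multiplicity

theorem hausdorffMeasure_zero_inter_preimage_le_liminf {X Y : Type*} [EMetricSpace X]
    [MeasurableSpace X] [BorelSpace X] [MeasurableSpace Y] {μ : Measure Y} {P : X → Y}
    {B : Set X} {D : ℕ → ℕ → Set X} {r : ℕ → ℝ≥0∞} (hr : Tendsto r atTop (𝓝 0))
    (hDB : ∀ n, ⋃ i, D n i = B) (hD : ∀ n i, ediam (D n i) ≤ r n) (y : Y) :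
    μH[0] (B ∩ P ⁻¹' {y}) ≤ liminf (fun n => imageMultiplicity μ P (D n) y) atTop := by
  refine hausdorffMeasure_zero_le_of_forall_finset fun F hF => ?_
  have hFD : ∀ n, ∀ x ∈ F, P x = y ∧ ∃ i, x ∈ D n i := fun n x hx =>
    ⟨(hF hx).2, mem_iUnion.1 ((hDB n).symm ▸ (hF hx).1)⟩
  exact le_liminf_of_le (by isBoundedDefault)
    ((eventually_subsingleton_inter_of_ediam_le F hr hD).mono fun n hn =>
      card_le_imageMultiplicity (hFD n) hn)

theorem lintegral_inter_preimage_eq_zero {X Y : Type*} [MeasurableSpace X] [MeasurableSpace Y]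
    {μ : Measure Y} (ν : Measure X) {P : X → Y} {B : Set X} (hB : μ (P '' B) = 0) :
    ∫⁻ y, ν (B ∩ P ⁻¹' {y}) ∂μ = 0 := by
  have hfibre : ∀ᵐ y ∂μ, ν (B ∩ P ⁻¹' {y}) = 0 :=
    (measure_eq_zero_iff_ae_notMem.1 hB).mono fun y hy => by
      rw [show B ∩ P ⁻¹' {y} = ∅ from eq_empty_of_forall_notMem fun x hx => hy ⟨x, hx⟩,
        measure_empty]
  exact (lintegral_congr_ae hfibre).trans lintegral_zero

theorem lintegral_hausdorffMeasure_zero_inter_preimage_le {X Y : Type*} [EMetricSpace X]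
    [MeasurableSpace X] [BorelSpace X] [MeasurableSpace Y] (μ : Measure Y) {P : X → Y}
    {c : ℝ≥0∞} {d : ℝ} (hP : ∀ s, μ (P '' s) ≤ c * μH[d] s) {B : Set X} (hB : MeasurableSet B) :
    ∫⁻ y, μH[0] (B ∩ P ⁻¹' {y}) ∂μ ≤ c * μH[d] B := by
  rcases eq_or_ne (μH[d] B) ∞ with hinf | hfin
  · rcases eq_or_ne c 0 with rfl | hc
    -- `0 * ∞ = 0`, so `P '' B` is null
    · rw [lintegral_inter_preimage_eq_zero _ (by simpa using hP B)]
      exact zero_le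
    · simp [hinf, ENNReal.mul_top hc]
  choose D hDm hDd hDB hD using fun n : ℕ => exists_measurable_partition_ediam_le hB hfin
    (ENNReal.inv_pos.2 (ENNReal.natCast_ne_top n))
  calc ∫⁻ y, μH[0] (B ∩ P ⁻¹' {y}) ∂μ
      ≤ ∫⁻ y, liminf (fun n => imageMultiplicity μ P (D n) y) atTop ∂μ :=
        lintegral_mono <| hausdorffMeasure_zero_inter_preimage_le_liminf
          ENNReal.tendsto_inv_nat_nhds_zero hDB hD
    _ ≤ liminf (fun n => ∫⁻ y, imageMultiplicity μ P (D n) y ∂μ) atTop :=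
        lintegral_liminf_le fun n => measurable_imageMultiplicity μ P (D n)
    _ ≤ c * μH[d] B := liminf_le_of_frequently_le' <| .of_forall fun n =>
        hDB n ▸ lintegral_imageMultiplicity_le μ P hP (hDm n) (hDd n)

end MeasureTheory

theorem stmt14_general {X : Type*} [MetricSpace X] [MeasurableSpace X] [BorelSpace X]
    {m : ℕ} (P : X → EuclideanSpace ℝ (Fin m))
    (α K : ℝ) (hα : 0 < α) (hK : 0 ≤ K)
    (hHolder : ∀ x x' : X, dist (P x) (P x') ≤ K * dist x x' ^ α)
    (B : Set X) (hB : MeasurableSet B) :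
    (∫⁻ y, μH[(0 : ℝ)] (B ∩ P ⁻¹' {y})
        ∂(μH[(m : ℝ)] : Measure (EuclideanSpace ℝ (Fin m)))) ≤
      ENNReal.ofReal (K ^ m) * μH[α * m] B := by
  lift K to NNReal using hK
  lift α to NNReal using hα.le
  have hP : HolderWith K α P := .of_dist_le hHolder
  refine lintegral_hausdorffMeasure_zero_inter_preimage_le _ (fun s => ?_) hB
  have h := (hP.holderOnWith s).hausdorffMeasure_image_le (NNReal.coe_pos.1 hα) m.cast_nonneg
  rwa [ENNReal.rpow_natCast, ← ENNReal.coe_pow, ← ENNReal.ofReal_coe_nnreal, NNReal.coe_pow] at h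

/-- Coarea-type inequality for Hölder maps (Federer 2.10.11):
`∫ ℋ⁰(B ∩ P⁻¹(y)) dℋ^m(y) ≤ ‖P‖_{C^{0,α}}^m · ℋ^{αm}(B)`. -/
theorem stmt14 {X : Type*} [MetricSpace X] [MeasurableSpace X] [BorelSpace X]
    {m : ℕ} (P : X → EuclideanSpace ℝ (Fin m))
    (α K : ℝ) (hα : 0 < α) (hα1 : α ≤ 1) (hK : 0 ≤ K)
    (hHolder : ∀ x x' : X, dist (P x) (P x') ≤ K * dist x x' ^ α)
    (B : Set X) (hB : MeasurableSet B) :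
    (∫⁻ y, μH[(0 : ℝ)] (B ∩ P ⁻¹' {y})
        ∂(μH[(m : ℝ)] : Measure (EuclideanSpace ℝ (Fin m)))) ≤
      ENNReal.ofReal (K ^ m) * μH[α * m] B :=
  stmt14_general P α K hα hK hHolder B hB
end
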